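/- arXiv:1903.08487 — 2 statements merged into one kernel-verified Lean document; each statement's English description precedes it below -/
import Mathlib

section
/- For all real a, b, ν with a ≥ 0, b > 0, a/b < ν < 1 and ν > 0, the integral ∫₀^∞ cosh(a x)/(sinh(b x))^ν dx equals (2^{ν−2}/(b·cos(πν/2))) · cos(πa/(2b)) · B(ν/2 + a/(2b), ν/2 − a/(2b)). -/
open Real MeasureTheory Set

lemma beta_cast_aux {p q : ℝ} (x : ℝ) (hx : x ∈ Set.Icc (0:ℝ) 1) :
    ((x:ℂ)) ^ ((p:ℂ) - 1) * ((1:ℂ) - x) ^ ((q:ℂ) - 1)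
      = ((x ^ (p-1) * (1-x) ^ (q-1) : ℝ) : ℂ) := by
  have h1 : (0:ℝ) ≤ x := hx.1
  have h2 : (0:ℝ) ≤ 1 - x := by linarith [hx.2]
  rw [Complex.ofReal_mul, Complex.ofReal_cpow h1, Complex.ofReal_cpow h2]
  push_cast
  ring

lemma realBeta_integrable {p q : ℝ} (hp : 0 < p) (hq : 0 < q) :
    IntegrableOn (fun t : ℝ => t ^ (p-1) * (1-t) ^ (q-1)) (Set.Ioo 0 1) := by
  have h := Complex.betaIntegral_convergent (u := (p:ℂ)) (v := (q:ℂ))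
    (by simpa using hp) (by simpa using hq)
  have h2 : IntegrableOn (fun x : ℝ => (x:ℂ) ^ ((p:ℂ)-1) * ((1:ℂ)-x) ^ ((q:ℂ)-1))
      (Set.Ioo (0:ℝ) 1) := (h.1.mono_set Set.Ioo_subset_Ioc_self)
  have h3 : IntegrableOn (fun x : ℝ => ((x ^ (p-1) * (1-x) ^ (q-1) : ℝ) : ℂ))
      (Set.Ioo (0:ℝ) 1) := by
    refine h2.congr_fun (fun x hx => ?_) measurableSet_Ioo
    exact beta_cast_aux x ⟨hx.1.le, hx.2.le⟩
  have h4 := h3.re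
  refine (integrableOn_congr_fun (fun x _ => ?_) measurableSet_Ioo).mp h4
  simp

lemma realBeta {p q : ℝ} (hp : 0 < p) (hq : 0 < q) :
    ∫ t in Set.Ioo (0:ℝ) 1, t ^ (p-1) * (1-t) ^ (q-1)
      = Real.Gamma p * Real.Gamma q / Real.Gamma (p+q) := by
  have hint : Complex.betaIntegral p q
      = ((∫ x in (0:ℝ)..1, x ^ (p-1) * (1-x) ^ (q-1) : ℝ) : ℂ) := by
    rw [Complex.betaIntegral, ← intervalIntegral.integral_ofReal]
    refine intervalIntegral.integral_congr (fun x hx => ?_)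
    rw [Set.uIcc_of_le zero_le_one] at hx
    exact beta_cast_aux x hx
  have hG := Complex.Gamma_mul_Gamma_eq_betaIntegral
    (s := (p:ℂ)) (t := (q:ℂ)) (by simpa using hp) (by simpa using hq)
  rw [hint] at hG
  have hpq : ((p:ℂ) + q) = ((p + q : ℝ) : ℂ) := by push_cast; ring
  rw [hpq, Complex.Gamma_ofReal, Complex.Gamma_ofReal, Complex.Gamma_ofReal] at hG
  have hG' : Real.Gamma p * Real.Gamma q
      = Real.Gamma (p+q) * ∫ x in (0:ℝ)..1, x ^ (p-1) * (1-x) ^ (q-1) := by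
    exact_mod_cast hG
  have hne : Real.Gamma (p+q) ≠ 0 := (Real.Gamma_pos_of_pos (by linarith)).ne'
  rw [← integral_Ioc_eq_integral_Ioo, ← intervalIntegral.integral_of_le zero_le_one]
  field_simp [hG']
  rw [hG']; ring

lemma key_algebra (p q : ℝ) (hp0 : 0 < p) (hq0 : 0 < q) (hpq1 : p + q < 1) :
    Real.Gamma p * Real.Gamma (1-(p+q)) / Real.Gamma (p + (1-(p+q)))
      + Real.Gamma q * Real.Gamma (1-(p+q)) / Real.Gamma (q + (1-(p+q)))
      = Real.cos (π*(p-q)/2) / Real.cos (π*(p+q)/2)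
        * (Real.Gamma p * Real.Gamma q / Real.Gamma (p+q)) := by
  have hp1 : p < 1 := by linarith
  have hq1 : q < 1 := by linarith
  have hpi := Real.pi_pos
  have hGp : 0 < Real.Gamma p := Real.Gamma_pos_of_pos hp0
  have hGq : 0 < Real.Gamma q := Real.Gamma_pos_of_pos hq0
  have hGpq : 0 < Real.Gamma (p+q) := Real.Gamma_pos_of_pos (by linarith)
  have hsp : 0 < Real.sin (π*p) := Real.sin_pos_of_pos_of_lt_pi (by positivity)
    (by nlinarith)
  have hsq : 0 < Real.sin (π*q) := Real.sin_pos_of_pos_of_lt_pi (by positivity)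
    (by nlinarith)
  have hsh : 0 < Real.sin (π*(p+q)/2) := Real.sin_pos_of_pos_of_lt_pi (by positivity)
    (by nlinarith)
  have hch : 0 < Real.cos (π*(p+q)/2) := Real.cos_pos_of_mem_Ioo
    ⟨by nlinarith, by nlinarith⟩
  -- reflection formulas in product form
  have R2 := Real.Gamma_mul_Gamma_one_sub q
  have R1 := Real.Gamma_mul_Gamma_one_sub p
  have R3 := Real.Gamma_mul_Gamma_one_sub (p+q)
  have E2 : Real.Gamma (p + (1-(p+q))) = π / (Real.Gamma q * Real.sin (π*q)) := by
    rw [show p + (1-(p+q)) = 1 - q by ring]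
    rw [eq_div_iff (by positivity)]
    rw [eq_div_iff hsq.ne'] at R2
    linarith [R2]
  have E1 : Real.Gamma (q + (1-(p+q))) = π / (Real.Gamma p * Real.sin (π*p)) := by
    rw [show q + (1-(p+q)) = 1 - p by ring]
    rw [eq_div_iff (by positivity)]
    rw [eq_div_iff hsp.ne'] at R1
    linarith [R1]
  have E3 : Real.Gamma (1-(p+q)) = π / (Real.Gamma (p+q) * Real.sin (π*(p+q))) := by
    have hsν : 0 < Real.sin (π*(p+q)) := Real.sin_pos_of_pos_of_lt_pi (by positivity)
      (by nlinarith)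
    rw [eq_div_iff (by positivity)]
    rw [eq_div_iff hsν.ne'] at R3
    linarith [R3]
  have S1 : Real.sin (π*p) + Real.sin (π*q)
      = 2 * Real.sin (π*(p+q)/2) * Real.cos (π*(p-q)/2) := by
    rw [show π*p = π*(p+q)/2 + π*(p-q)/2 by ring, show π*q = π*(p+q)/2 - π*(p-q)/2 by ring,
      Real.sin_add, Real.sin_sub]
    ring
  have S2 : Real.sin (π*(p+q)) = 2 * Real.sin (π*(p+q)/2) * Real.cos (π*(p+q)/2) := by
    rw [show π*(p+q) = 2*(π*(p+q)/2) by ring, Real.sin_two_mul]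
    ring
  rw [E1, E2, E3, S2]
  field_simp
  linear_combination S1

set_option maxHeartbeats 1000000 in
theorem stmt_7 (a b ν : ℝ) (ha : 0 ≤ a) (hb : 0 < b) (hν1 : a / b < ν) (hν2 : ν < 1)
    (hν0 : 0 < ν) :
    ∫ x in Set.Ioi (0:ℝ), Real.cosh (a * x) / Real.sinh (b * x) ^ ν =
      (2:ℝ) ^ (ν - 2) / (b * Real.cos (Real.pi * ν / 2)) *
        Real.cos (Real.pi * a / (2 * b)) *
        (Real.Gamma (ν / 2 + a / (2 * b)) * Real.Gamma (ν / 2 - a / (2 * b)) /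
          Real.Gamma ((ν / 2 + a / (2 * b)) + (ν / 2 - a / (2 * b)))) := by
  have hb' : b ≠ 0 := hb.ne'
  have hpi := Real.pi_pos
  set p : ℝ := ν/2 + a/(2*b) with hpdef
  set q : ℝ := ν/2 - a/(2*b) with hqdef
  have hcq : a/(2*b) < ν/2 := by
    have h := (div_lt_iff₀ hb).mp hν1
    rw [div_lt_div_iff₀ (by positivity) (by norm_num : (0:ℝ) < 2)]
    nlinarith
  have hc0 : 0 ≤ a/(2*b) := by positivity
  have hp0 : 0 < p := by rw [hpdef]; linarith
  have hq0 : 0 < q := by rw [hqdef]; linarith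
  have hpq : p + q = ν := by rw [hpdef, hqdef]; ring
  have h1ν : 0 < 1 - ν := by linarith
  have hderiv : ∀ x ∈ Set.Ioi (0:ℝ),
      HasDerivWithinAt (fun x : ℝ => Real.exp ((-(2*b))*x))
        (Real.exp ((-(2*b))*x) * (-(2*b))) (Set.Ioi 0) x := by
    intro x _
    have h := (((hasDerivAt_id x).const_mul (-(2*b))).exp)
    simp only [mul_one, id_eq] at h
    exact h.hasDerivWithinAt
  have hinj : Set.InjOn (fun x : ℝ => Real.exp ((-(2*b))*x)) (Set.Ioi 0) := by
    intro x _ y _ hxy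
    have h := Real.exp_injective hxy
    exact mul_left_cancel₀ (by nlinarith : (-(2*b)) ≠ (0:ℝ)) h
  have himg : (fun x : ℝ => Real.exp ((-(2*b))*x)) '' Set.Ioi 0 = Set.Ioo (0:ℝ) 1 := by
    ext t
    simp only [Set.mem_image, Set.mem_Ioi, Set.mem_Ioo]
    constructor
    · rintro ⟨x, hx, rfl⟩
      exact ⟨Real.exp_pos _, Real.exp_lt_one_iff.mpr (by nlinarith)⟩
    · rintro ⟨ht0, ht1⟩
      refine ⟨Real.log t / (-(2*b)), ?_, ?_⟩
      · exact div_pos_of_neg_of_neg (Real.log_neg ht0 ht1) (by linarith)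
      · rw [show (-(2*b)) * (Real.log t / (-(2*b))) = Real.log t by field_simp]
        exact Real.exp_log ht0
  have hchg := integral_image_eq_integral_abs_deriv_smul measurableSet_Ioi hderiv hinj
    (fun t => (2:ℝ)^(ν-2)/b * (t^(p-1)*(1-t)^((1-ν)-1) + t^(q-1)*(1-t)^((1-ν)-1)))
  rw [himg] at hchg
  have hpt : ∀ x ∈ Set.Ioi (0:ℝ),
      |Real.exp ((-(2*b))*x) * (-(2*b))| • ((2:ℝ)^(ν-2)/b *
        ((Real.exp ((-(2*b))*x))^(p-1)*(1-Real.exp ((-(2*b))*x))^((1-ν)-1)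
          + (Real.exp ((-(2*b))*x))^(q-1)*(1-Real.exp ((-(2*b))*x))^((1-ν)-1)))
      = Real.cosh (a*x) / Real.sinh (b*x)^ν := by
    intro x hx
    have hx0 : (0:ℝ) < x := hx
    have ht0 : 0 < Real.exp ((-(2*b))*x) := Real.exp_pos _
    have ht1 : Real.exp ((-(2*b))*x) < 1 := Real.exp_lt_one_iff.mpr (by nlinarith)
    have h1t : 0 < 1 - Real.exp ((-(2*b))*x) := by linarith
    have habs : |Real.exp ((-(2*b))*x) * (-(2*b))| = Real.exp ((-(2*b))*x) * (2*b) := by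
      rw [abs_mul, abs_of_pos ht0, abs_of_neg (by nlinarith : (-(2*b)) < (0:ℝ))]
      ring
    have hrp : ∀ r : ℝ, Real.exp ((-(2*b))*x) ^ r = Real.exp ((-(2*b))*x*r) := fun r => by
      rw [Real.rpow_def_of_pos ht0, Real.log_exp]
    have hsinh : Real.sinh (b*x) = Real.exp (b*x) * (1 - Real.exp ((-(2*b))*x))/2 := by
      have h2 : Real.exp (b*x) * Real.exp ((-(2*b))*x) = Real.exp (-(b*x)) := by
        rw [← Real.exp_add]; ring_nf
      rw [Real.sinh_eq, ← h2]; ring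
    have hsinhpow : Real.sinh (b*x) ^ ν
        = Real.exp (b*x*ν) * (1 - Real.exp ((-(2*b))*x))^ν / 2^ν := by
      rw [hsinh, Real.div_rpow (by positivity) (by norm_num),
        Real.mul_rpow (Real.exp_pos _).le h1t.le, ← Real.exp_mul]
    have k1 : Real.exp ((-(2*b))*x) * Real.exp ((-(2*b))*x*(p-1)) * Real.exp (b*x*ν)
        = Real.exp (-(a*x)) := by
      rw [← Real.exp_add, ← Real.exp_add]
      congr 1
      rw [hpdef]
      field_simp
      ring
    have k2 : Real.exp ((-(2*b))*x) * Real.exp ((-(2*b))*x*(q-1)) * Real.exp (b*x*ν)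
        = Real.exp (a*x) := by
      rw [← Real.exp_add, ← Real.exp_add]
      congr 1
      rw [hqdef]
      field_simp
      ring
    have k3 : (1 - Real.exp ((-(2*b))*x))^((1-ν)-1) = ((1 - Real.exp ((-(2*b))*x))^ν)⁻¹ := by
      rw [show (1-ν)-1 = -ν by ring, Real.rpow_neg h1t.le]
    have k4 : (2:ℝ)^(ν-2) = 2^ν/4 := by
      rw [Real.rpow_sub (by norm_num : (0:ℝ) < 2)]
      norm_num
    have h2ν : (0:ℝ) < (2:ℝ)^ν := by positivity
    have h1tν : (0:ℝ) < (1 - Real.exp ((-(2*b))*x))^ν := by positivity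
    have hE : (0:ℝ) < Real.exp (b*x*ν) := Real.exp_pos _
    rw [smul_eq_mul, habs, hsinhpow, Real.cosh_eq, hrp (p-1), hrp (q-1), k3, k4]
    have k1' : Real.exp (-(2*b*x)) * Real.exp (-(2*b*x*(p-1))) * Real.exp (b*x*ν)
        = Real.exp (-(a*x)) := by
      rw [show -(2*b*x) = (-(2*b))*x by ring, show -(2*b*x*(p-1)) = (-(2*b))*x*(p-1) by ring]
      exact k1
    have k2' : Real.exp (-(2*b*x)) * Real.exp (-(2*b*x*(q-1))) * Real.exp (b*x*ν)
        = Real.exp (a*x) := by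
      rw [show -(2*b*x) = (-(2*b))*x by ring, show -(2*b*x*(q-1)) = (-(2*b))*x*(q-1) by ring]
      exact k2
    field_simp
    have h1t' : (0:ℝ) < 1 - Real.exp (-(2*b*x)) := by
      rw [show -(2*b*x) = (-(2*b))*x by ring]; exact h1t
    have hu' : (0:ℝ) < (1 - Real.exp (-(2*b*x)))^ν := Real.rpow_pos_of_pos h1t' ν
    have d1 : (0:ℝ) < 4*b*(1 - Real.exp (-(2*b*x)))^ν :=
      mul_pos (by linarith) hu'
    have d2 : (0:ℝ) < 2*(Real.exp (b*x*ν)*(1 - Real.exp (-(2*b*x)))^ν) :=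
      mul_pos two_pos (mul_pos hE hu')
    rw [div_left_inj' hu'.ne', mul_comm x a]
    linear_combination 4 * k1' + 4 * k2'
  have hL : ∫ x in Set.Ioi (0:ℝ), Real.cosh (a*x) / Real.sinh (b*x)^ν
      = ∫ t in Set.Ioo (0:ℝ) 1,
          (2:ℝ)^(ν-2)/b * (t^(p-1)*(1-t)^((1-ν)-1) + t^(q-1)*(1-t)^((1-ν)-1)) := by
    rw [hchg]
    exact (setIntegral_congr_fun measurableSet_Ioi hpt).symm
  rw [hL]
  have hsplit : (∫ t in Set.Ioo (0:ℝ) 1,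
      (2:ℝ)^(ν-2)/b * (t^(p-1)*(1-t)^((1-ν)-1) + t^(q-1)*(1-t)^((1-ν)-1)))
      = (2:ℝ)^(ν-2)/b *
      ((∫ t in Set.Ioo (0:ℝ) 1, t^(p-1)*(1-t)^((1-ν)-1))
        + ∫ t in Set.Ioo (0:ℝ) 1, t^(q-1)*(1-t)^((1-ν)-1)) := by
    rw [MeasureTheory.integral_const_mul _ _,
      MeasureTheory.integral_add (realBeta_integrable hp0 h1ν) (realBeta_integrable hq0 h1ν)]
  rw [hsplit, realBeta hp0 h1ν, realBeta hq0 h1ν]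
  rw [show (1:ℝ)-ν = 1-(p+q) by rw [hpq]]
  rw [key_algebra p q hp0 hq0 (by rw [hpq]; linarith)]
  rw [show π*(p-q)/2 = π*a/(2*b) by rw [hpdef, hqdef]; field_simp; ring]
  rw [show π*(p+q)/2 = π*ν/2 by rw [hpq]]
  ring
end

section
/- For every real μ with μ > 2, the integral ∫₀^∞ x^{μ−1} · cosh x/(sinh x)² dx equals 2·Γ(μ)·ζ(μ−1)·(1 − 2^{1−μ}), where ζ is the Riemann zeta function. -/
open Real MeasureTheory Set

private lemma aux_summable {s : ℝ} (hs : 1 < s) :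
    Summable (fun n : ℕ => ((n : ℝ) + 1) ^ (-s)) := by
  have h : Summable (fun n : ℕ => (n : ℝ) ^ (-s)) :=
    Real.summable_nat_rpow.2 (by linarith)
  have h2 := (summable_nat_add_iff 1).2 h
  refine h2.congr fun n => ?_
  push_cast
  ring_nf

private lemma aux_summable_odd {s : ℝ} (hs : 1 < s) :
    Summable (fun n : ℕ => (2 * (n : ℝ) + 1) ^ (-s)) := by
  refine Summable.of_nonneg_of_le (fun n => ?_) (fun n => ?_) (aux_summable hs)
  · positivity
  · exact Real.rpow_le_rpow_of_nonpos (by positivity)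
      (by linarith [Nat.cast_nonneg (α := ℝ) n]) (by linarith)

private lemma aux_odd_sum {s : ℝ} (hs : 1 < s) :
    ∑' n : ℕ, (2 * (n : ℝ) + 1) ^ (-s) =
      (∑' n : ℕ, ((n : ℝ) + 1) ^ (-s)) * (1 - (2:ℝ) ^ (-s)) := by
  set g : ℕ → ℝ := fun n => ((n : ℝ) + 1) ^ (-s) with hg
  have hZ := aux_summable hs
  have he : ∀ k : ℕ, g (2 * k) = (2 * (k : ℝ) + 1) ^ (-s) := by
    intro k; simp only [hg]; push_cast; ring_nf
  have ho : ∀ k : ℕ, g (2 * k + 1) = (2:ℝ) ^ (-s) * g k := by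
    intro k
    simp only [hg]
    rw [← Real.mul_rpow (by norm_num) (by positivity)]
    push_cast
    ring_nf
  have hse : Summable fun k => g (2 * k) :=
    (aux_summable_odd hs).congr fun k => (he k).symm
  have hso : Summable fun k => g (2 * k + 1) :=
    (hZ.mul_left ((2:ℝ) ^ (-s))).congr fun k => (ho k).symm
  have key := tsum_even_add_odd hse hso
  have h1 : ∑' k : ℕ, g (2 * k) = ∑' n : ℕ, (2 * (n : ℝ) + 1) ^ (-s) :=
    tsum_congr he
  have h2 : ∑' k : ℕ, g (2 * k + 1) = (2:ℝ) ^ (-s) * ∑' n, g n := by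
    rw [tsum_congr ho, tsum_mul_left]
  rw [h1, h2] at key
  have h3 : ∑' n : ℕ, (2 * (n : ℝ) + 1) ^ (-s)
      = ∑' n, g n - (2:ℝ) ^ (-s) * ∑' n, g n := by linarith
  rw [h3]; ring

theorem stmt_18 (μ : ℝ) (hμ : 2 < μ) :
    ∫ x in Set.Ioi (0:ℝ), x ^ (μ - 1) * (Real.cosh x / Real.sinh x ^ 2) =
      2 * Real.Gamma μ * (∑' n : ℕ, ((n : ℝ) + 1) ^ (-(μ - 1))) *
        (1 - (2:ℝ) ^ (1 - μ)) := by
  have hs1 : 1 < μ - 1 := by linarith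
  set F : ℕ → ℝ → ℝ := fun n x =>
    (2 * (2 * (n : ℝ) + 1)) * (x ^ (μ - 1) * Real.exp (-((2 * (n : ℝ) + 1) * x))) with hF
  have hrpos : ∀ n : ℕ, (0:ℝ) < 2 * (n : ℝ) + 1 := fun n => by positivity
  -- pointwise sum
  have hptwise : ∀ x : ℝ, x ∈ Set.Ioi (0:ℝ) →
      HasSum (fun n => F n x) (x ^ (μ - 1) * (Real.cosh x / Real.sinh x ^ 2)) := by
    intro x hx
    rw [Set.mem_Ioi] at hx
    set r : ℝ := Real.exp (-(2 * x)) with hr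
    have hr0 : 0 < r := Real.exp_pos _
    have hr1 : r < 1 := by
      rw [hr, Real.exp_lt_one_iff]; linarith
    have h1 : HasSum (fun n : ℕ => (n : ℝ) * r ^ n) (r / (1 - r) ^ 2) :=
      hasSum_coe_mul_geometric_of_norm_lt_one (by rwa [Real.norm_eq_abs, abs_of_pos hr0])
    have h2 : HasSum (fun n : ℕ => r ^ n) (1 - r)⁻¹ :=
      hasSum_geometric_of_lt_one hr0.le hr1
    have h3 := ((h1.mul_left 2).add h2).mul_left (x ^ (μ - 1) * (2 * Real.exp (-x)))
    have hfun : ∀ n : ℕ, x ^ (μ - 1) * (2 * Real.exp (-x)) * (2 * ((n : ℝ) * r ^ n) + r ^ n)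
        = F n x := by
      intro n
      have hrn : r ^ n = Real.exp ((n : ℝ) * (-(2 * x))) := by
        rw [hr, ← Real.exp_nat_mul]
      have hex : Real.exp (-x) * r ^ n = Real.exp (-((2 * (n : ℝ) + 1) * x)) := by
        rw [hrn, ← Real.exp_add]; congr 1; ring
      simp only [hF]
      calc x ^ (μ - 1) * (2 * Real.exp (-x)) * (2 * ((n : ℝ) * r ^ n) + r ^ n)
          = (2 * (2 * (n : ℝ) + 1)) * (x ^ (μ - 1) * (Real.exp (-x) * r ^ n)) := by ring
        _ = _ := by rw [hex]
    have hval : x ^ (μ - 1) * (2 * Real.exp (-x)) * (2 * (r / (1 - r) ^ 2) + (1 - r)⁻¹)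
        = x ^ (μ - 1) * (Real.cosh x / Real.sinh x ^ 2) := by
      have h1r : (0:ℝ) < 1 - r := by linarith
      have hee : Real.exp x * r = Real.exp (-x) := by
        rw [hr, ← Real.exp_add]; congr 1; ring
      have hsinh : Real.sinh x = Real.exp x * (1 - r) / 2 := by
        rw [Real.sinh_eq, mul_sub, mul_one, hee]
      have hcosh : Real.cosh x = Real.exp x * (1 + r) / 2 := by
        rw [Real.cosh_eq, mul_add, mul_one, hee]
      have hexne : Real.exp x ≠ 0 := (Real.exp_pos x).ne'
      have hexneg : Real.exp (-x) = (Real.exp x)⁻¹ := Real.exp_neg x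
      rw [hsinh, hcosh, hexneg]
      field_simp
      ring
    rw [funext hfun, hval] at h3
    exact h3
  -- integral of each term
  have hkey : ∀ n : ℕ, ∫ x in Set.Ioi (0:ℝ), F n x
      = 2 * Real.Gamma μ * (2 * (n : ℝ) + 1) ^ (-(μ - 1)) := by
    intro n
    simp only [hF]
    rw [MeasureTheory.integral_const_mul,
      Real.integral_rpow_mul_exp_neg_mul_Ioi (by linarith : (0:ℝ) < μ) (hrpos n)]
    have e1 : (1 / (2 * (n : ℝ) + 1)) ^ μ = (2 * (n : ℝ) + 1) ^ (-μ) := by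
      rw [one_div, Real.inv_rpow (hrpos n).le, ← Real.rpow_neg (hrpos n).le]
    have e2 : (2 * (n : ℝ) + 1) * (2 * (n : ℝ) + 1) ^ (-μ) = (2 * (n : ℝ) + 1) ^ (-(μ - 1)) := by
      rw [show -(μ - 1) = 1 + -μ by ring, Real.rpow_add (hrpos n), Real.rpow_one]
    rw [e1, ← e2]; ring
  -- integrability
  have hInt : ∀ n : ℕ, IntegrableOn (F n) (Set.Ioi (0:ℝ)) := by
    intro n
    have h := integrableOn_rpow_mul_exp_neg_mul_rpow
      (s := μ - 1) (p := 1) (b := 2 * (n : ℝ) + 1) (by linarith) one_pos (hrpos n)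
    have h2 := h.const_mul (2 * (2 * (n : ℝ) + 1))
    refine MeasureTheory.IntegrableOn.congr_fun h2 (fun x hx => ?_) measurableSet_Ioi
    simp only [hF, Real.rpow_one]
    ring
  have hnorm : Summable fun n : ℕ => ∫ x in Set.Ioi (0:ℝ), ‖F n x‖ := by
    have heq : ∀ n : ℕ, (∫ x in Set.Ioi (0:ℝ), ‖F n x‖)
        = 2 * Real.Gamma μ * (2 * (n : ℝ) + 1) ^ (-(μ - 1)) := by
      intro n
      rw [← hkey n]
      refine setIntegral_congr_fun measurableSet_Ioi (fun x hx => ?_)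
      rw [Set.mem_Ioi] at hx
      rw [Real.norm_eq_abs, abs_of_nonneg]
      simp only [hF]
      positivity
    rw [funext heq]
    exact ((aux_summable_odd hs1).mul_left _)
  -- put everything together
  have hswap : ∑' n : ℕ, (∫ x in Set.Ioi (0:ℝ), F n x)
      = ∫ x in Set.Ioi (0:ℝ), ∑' n : ℕ, F n x :=
    MeasureTheory.integral_tsum_of_summable_integral_norm hInt hnorm
  have hcongr : ∫ x in Set.Ioi (0:ℝ), x ^ (μ - 1) * (Real.cosh x / Real.sinh x ^ 2)
      = ∫ x in Set.Ioi (0:ℝ), ∑' n : ℕ, F n x := by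
    refine setIntegral_congr_fun measurableSet_Ioi (fun x hx => ?_)
    exact ((hptwise x hx).tsum_eq).symm
  rw [hcongr, ← hswap, funext hkey, tsum_mul_left, aux_odd_sum hs1]
  rw [show -(μ - 1) = 1 - μ by ring]
  ring
end
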